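/- arXiv:1108.2899 — 8 statements merged into one kernel-verified Lean document; each statement's English description precedes it below -/
import Mathlib

section
/- Let V be a finite type, let G : SimpleGraph V be a tree (G.IsTree), and let θ : Equiv.Perm V satisfy θ x ≠ x for every x : V. Let p : ∀ u v : V, G.Walk u v be any family of walks such that (p u v).IsPath for all u v (in a tree such a path exists and is unique). Then ∑_{d : G.Dart} ( (if d ∈ (p (θ d.toProd.1) (θ d.toProd.2)).darts then (1 : ℤ) else 0) - (if d.symm ∈ (p (θ d.toProd.1) (θ d.toProd.2)).darts then (1 : ℤ) else 0) ) = -2. -/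
/-!
If the edge of a dart `d` is a bridge, the signed number of times a walk crosses `d` is
`χ(end) - χ(start)`, where `χ = d.sndSide` indicates the side of `d.snd` once that edge is
removed. In a tree every edge is a bridge, so the term of `d = (a, b)` is
`χ(θ b) - χ(θ a) = 1 + f_b(d) - f_a(d)`, with `f_v` the signed crossing count of a walk from
`v` to `θ v`. By flow conservation the darts leaving `v` contribute `1` to `f_v` (as `θ v ≠ v`),
and reversing darts turns `∑ f_{d.snd}(d)` into `-∑ f_{d.fst}(d)`. The sum is therefore
`#darts - 2 #V = 2 (#V - 1) - 2 #V = -2`.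
-/

open Finset

namespace SimpleGraph

variable {V : Type*} {G : SimpleGraph V}

open Classical in
noncomputable def Dart.sndSide (d : G.Dart) (x : V) : ℤ :=
  if (G.deleteEdges {d.edge}).Reachable d.snd x then 1 else 0

lemma Dart.sndSide_snd (d : G.Dart) : d.sndSide d.snd = 1 := by
  simp [sndSide]

lemma Dart.sndSide_fst {d : G.Dart} (hd : G.IsBridge d.edge) : d.sndSide d.fst = 0 := by
  have : ¬ (G.deleteEdges {d.edge}).Reachable d.snd d.fst := fun h => hd h.symm
  simp [sndSide, this]

lemma Dart.sndSide_eq_of_adj (d : G.Dart) {a b : V} (h : G.Adj a b) (hab : s(a, b) ≠ d.edge) :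
    d.sndSide a = d.sndSide b := by
  have hadj : (G.deleteEdges {d.edge}).Adj a b := by simp [h, hab]
  simp only [sndSide]
  congr 1
  exact propext ⟨fun hr => hr.trans hadj.reachable, fun hr => hr.trans hadj.symm.reachable⟩

variable [DecidableEq V]

lemma Dart.sndSide_snd_sub_fst {d : G.Dart} (hd : G.IsBridge d.edge) (e : G.Dart) :
    d.sndSide e.snd - d.sndSide e.fst =
      (if e = d then 1 else 0) - if e = d.symm then 1 else 0 := by
  by_cases hed : e = d
  · subst hed
    simp [sndSide_snd, sndSide_fst hd, e.symm_ne.symm]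
  by_cases heds : e = d.symm
  · subst heds
    simp [hed, sndSide_snd, sndSide_fst hd]
  · have : e.edge ≠ d.edge := by simpa [dart_edge_eq_iff] using And.intro hed heds
    simp [hed, heds, d.sndSide_eq_of_adj e.adj this]

def Walk.dartFlow {u v : V} (w : G.Walk u v) (d : G.Dart) : ℤ :=
  w.darts.count d - w.darts.count d.symm

@[simp]
lemma Walk.dartFlow_nil {u : V} (d : G.Dart) : (nil : G.Walk u u).dartFlow d = 0 := by
  simp [dartFlow]

lemma Walk.dartFlow_cons {u v x : V} (h : G.Adj u v) (w : G.Walk v x) (d : G.Dart) :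
    (cons h w).dartFlow d =
      ((if ⟨(u, v), h⟩ = d then 1 else 0) - if ⟨(u, v), h⟩ = d.symm then 1 else 0) +
        w.dartFlow d := by
  simp only [dartFlow, darts_cons, List.count_cons, beq_iff_eq]
  push_cast
  ring

lemma Walk.dartFlow_symm {u v : V} (w : G.Walk u v) (d : G.Dart) :
    w.dartFlow d.symm = -w.dartFlow d := by
  simp [dartFlow, Dart.symm_symm]

lemma Walk.IsPath.dartFlow_eq {u v : V} {w : G.Walk u v} (hw : w.IsPath) (d : G.Dart) :
    w.dartFlow d = (if d ∈ w.darts then 1 else 0) - if d.symm ∈ w.darts then 1 else 0 := by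
  have hnd : w.darts.Nodup := darts_nodup_of_support_nodup hw.support_nodup
  simp only [dartFlow, hnd.count]
  push_cast
  rfl

lemma Walk.dartFlow_eq_sndSide_sub {d : G.Dart} (hd : G.IsBridge d.edge) {u v : V}
    (w : G.Walk u v) : w.dartFlow d = d.sndSide v - d.sndSide u := by
  induction w with
  | nil => simp
  | @cons a b c h w ih =>
    rw [dartFlow_cons, ih, ← Dart.sndSide_snd_sub_fst hd ⟨(a, b), h⟩]
    ring

variable [Fintype V] [DecidableRel G.Adj]

lemma Walk.sum_dartFlow_fst_eq {u x : V} (w : G.Walk u x) (v : V) :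
    ∑ d : G.Dart with d.fst = v, w.dartFlow d =
      (if v = u then 1 else 0) - if v = x then 1 else 0 := by
  induction w with
  | nil => simp
  | @cons a b c h w ih =>
    have hsymm (e d : G.Dart) : e = d.symm ↔ e.symm = d := Dart.symm_involutive.eq_iff.symm
    simp only [dartFlow_cons, sum_add_distrib, ih, sum_sub_distrib, hsymm, sum_ite_eq, mem_filter,
      mem_univ, true_and]
    change ((if a = v then 1 else 0) - if b = v then 1 else 0) + _ = _
    grind

lemma sum_dartFlow_fst_eq_card {f : V → V} (hf : ∀ v, f v ≠ v) (q : ∀ v, G.Walk v (f v)) :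
    ∑ d : G.Dart, (q d.fst).dartFlow d = Fintype.card V := by
  rw [← sum_fiberwise univ (fun d => d.fst)]
  have hfiber (v : V) : ∑ d : G.Dart with d.fst = v, (q d.fst).dartFlow d = 1 := by
    rw [sum_congr rfl fun d hd => by rw [(mem_filter.1 hd).2], (q v).sum_dartFlow_fst_eq]
    simp [(hf v).symm]
  simp [hfiber]

end SimpleGraph

open SimpleGraph

theorem tree_vertex_map_trace_sum {V : Type*} [Fintype V] [DecidableEq V]
    (G : SimpleGraph V) [DecidableRel G.Adj] (hG : G.IsTree)
    (θ : Equiv.Perm V) (hθ : ∀ x : V, θ x ≠ x)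
    (p : ∀ u v : V, G.Walk u v) (hp : ∀ u v : V, (p u v).IsPath) :
    ∑ d : G.Dart,
        ((if d ∈ (p (θ d.toProd.1) (θ d.toProd.2)).darts then (1 : ℤ) else 0) -
          (if d.symm ∈ (p (θ d.toProd.1) (θ d.toProd.2)).darts then (1 : ℤ) else 0)) = -2 := by
  set q : ∀ v, G.Walk v (θ v) := fun v => p v (θ v)
  have hbridge (d : G.Dart) : G.IsBridge d.edge :=
    isAcyclic_iff_forall_isBridge.mp hG.isAcyclic d.edge_mem
  have hterm (d : G.Dart) : (p (θ d.fst) (θ d.snd)).dartFlow d =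
      1 + (q d.snd).dartFlow d - (q d.fst).dartFlow d := by
    simp only [q, Walk.dartFlow_eq_sndSide_sub (hbridge d), d.sndSide_snd,
      d.sndSide_fst (hbridge d)]
    ring
  have hsnd : ∑ d : G.Dart, (q d.snd).dartFlow d = -Fintype.card V :=
    calc ∑ d : G.Dart, (q d.snd).dartFlow d
        = ∑ d : G.Dart, (q d.symm.snd).dartFlow d.symm :=
          (Fintype.sum_bijective _ Dart.symm_involutive.bijective _ _ fun _ => rfl).symm
      _ = -∑ d : G.Dart, (q d.fst).dartFlow d := by
          simp only [Walk.dartFlow_symm, sum_neg_distrib]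
          rfl
      _ = _ := by rw [sum_dartFlow_fst_eq_card hθ q]
  simp_rw [← (hp _ _).dartFlow_eq, hterm]
  rw [sum_sub_distrib, sum_add_distrib, hsnd, sum_dartFlow_fst_eq_card hθ q, sum_const, card_univ,
    G.dart_card_eq_twice_card_edges, ← hG.card_edgeFinset]
  push_cast
  ring
end

section
/- Work with a finite oriented multigraph given by finite types V (vertices) and E (edges) together with maps s t : E → V, with V nonempty. Assume the multigraph has no loops and is connected, and let θ : Equiv.Perm V satisfy θ x ≠ x for every x : V. Then there exists a matrix M : Matrix E E ℤ that is a chain map over θ, is HTC, and satisfies Matrix.trace M = -1. -/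
/-- The boundary matrix of a finite oriented multigraph with source map `s`
and target map `t`: `∂ v e = [v = t e] - [v = s e]`. -/
def boundaryMatrix {V E : Type*} [DecidableEq V] (s t : E → V) : Matrix V E ℤ :=
  fun v e => (if v = t e then 1 else 0) - (if v = s e then 1 else 0)

/-- The permutation matrix of `θ`: `P_θ u w = [u = θ w]`. -/
def permMatrix {V : Type*} [DecidableEq V] (θ : Equiv.Perm V) : Matrix V V ℤ :=
  fun u w => if u = θ w then 1 else 0

/-- `M` is a chain map over the vertex permutation `θ`: `∂ * M = P_θ * ∂`. -/
def IsChainMap {V E : Type*} [DecidableEq V] [Fintype V] [Fintype E]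
    (s t : E → V) (θ : Equiv.Perm V) (M : Matrix E E ℤ) : Prop :=
  boundaryMatrix s t * M = permMatrix θ * boundaryMatrix s t

/-- `M` is HTC (homotopic-to-a-constant-map condition): `M` annihilates the
cycle space, i.e. the kernel of the boundary matrix. -/
def IsHTC {V E : Type*} [DecidableEq V] [Fintype E]
    (s t : E → V) (M : Matrix E E ℤ) : Prop :=
  ∀ x : E → ℤ, (boundaryMatrix s t).mulVec x = 0 → M.mulVec x = 0

/-- The multigraph has no loops: `s e ≠ t e` for every edge. -/
def NoLoops {V E : Type*} (s t : E → V) : Prop :=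
  ∀ e : E, s e ≠ t e

/-- The multigraph is connected: the smallest equivalence relation relating
`s e` and `t e` for every edge `e` is the total relation. -/
def IsConn {V E : Type*} (s t : E → V) : Prop :=
  ∀ u v : V, Relation.EqvGen (fun a b => ∃ e : E, s e = a ∧ t e = b) u v

theorem exists_chainMap_HTC_trace_neg_one
    {V E : Type*} [Fintype V] [DecidableEq V] [Fintype E] [Nonempty V]
    (s t : E → V) (hloop : NoLoops s t) (hconn : IsConn s t)
    (θ : Equiv.Perm V) (hθ : ∀ x : V, θ x ≠ x) :
    ∃ M : Matrix E E ℤ, IsChainMap s t θ M ∧ IsHTC s t M ∧ Matrix.trace M = -1 := by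
  classical
  obtain ⟨v₀⟩ := ‹Nonempty V›
  -- For each vertex v, a 1-chain from v₀ to v.
  have key : ∀ u v : V, Relation.EqvGen (fun a b => ∃ e : E, s e = a ∧ t e = b) u v →
      ∃ x : E → ℤ, (boundaryMatrix s t).mulVec x =
        fun w => (if w = v then 1 else 0) - (if w = u then 1 else 0) := by
    intro u v h
    induction h with
    | rel a b hab =>
      obtain ⟨e, hs, ht⟩ := hab
      refine ⟨fun f => if f = e then 1 else 0, ?_⟩
      funext w
      simp [Matrix.mulVec, dotProduct, boundaryMatrix, hs, ht]
    | refl a =>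
      exact ⟨0, by funext w; simp [Matrix.mulVec_zero]⟩
    | symm a b _ ih =>
      obtain ⟨x, hx⟩ := ih
      refine ⟨-x, ?_⟩
      rw [Matrix.mulVec_neg, hx]
      funext w; simp
    | trans a b cc _ _ ih1 ih2 =>
      obtain ⟨x, hx⟩ := ih1
      obtain ⟨y, hy⟩ := ih2
      refine ⟨x + y, ?_⟩
      rw [Matrix.mulVec_add, hx, hy]
      funext w; simp
  choose c hc using fun v => key v₀ v (hconn v₀ v)
  set C : Matrix E V ℤ := Matrix.of fun f v => c v f with hC
  -- ∂ * C = 1 - J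
  have hDC : boundaryMatrix s t * C =
      Matrix.of fun v w => (if v = w then (1:ℤ) else 0) - (if v = v₀ then 1 else 0) := by
    ext v w
    have h := congrFun (hc w) v
    simp only [Matrix.mulVec, dotProduct] at h
    simp only [Matrix.mul_apply, hC, Matrix.of_apply]
    rw [h]
  set B : Matrix V E ℤ := permMatrix θ * boundaryMatrix s t with hB
  -- column sums of B vanish
  have hcol : ∀ e : E, ∑ w : V, B w e = 0 := by
    intro e
    have h1 : ∀ u : V, ∑ w : V, (if w = θ u then (1:ℤ) else 0) = 1 := by
      intro u; simp
    calc ∑ w : V, B w e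
        = ∑ w : V, ∑ u : V, (if w = θ u then (1:ℤ) else 0) * boundaryMatrix s t u e := by
          simp [hB, Matrix.mul_apply, permMatrix]
      _ = ∑ u : V, (∑ w : V, (if w = θ u then (1:ℤ) else 0)) * boundaryMatrix s t u e := by
          rw [Finset.sum_comm]; simp [Finset.sum_mul]
      _ = ∑ u : V, boundaryMatrix s t u e := by simp [h1]
      _ = 0 := by simp [boundaryMatrix]
  refine ⟨C * B, ?_, ?_, ?_⟩
  · -- chain map
    show boundaryMatrix s t * (C * B) = B
    rw [← Matrix.mul_assoc, hDC]
    ext v e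
    rw [Matrix.mul_apply]
    simp [sub_mul, Finset.sum_sub_distrib, ite_mul, ← Finset.mul_sum, hcol e]
  · -- HTC
    intro x hx
    rw [← Matrix.mulVec_mulVec, hB, ← Matrix.mulVec_mulVec, hx, Matrix.mulVec_zero,
      Matrix.mulVec_zero]
  · -- trace
    rw [Matrix.trace_mul_comm, hB, Matrix.mul_assoc, hDC]
    have hPD : permMatrix θ * Matrix.of (fun v w => (if v = w then (1:ℤ) else 0) - (if v = v₀ then 1 else 0))
        = Matrix.of fun u w => (if u = θ w then (1:ℤ) else 0) - (if u = θ v₀ then 1 else 0) := by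
      ext u w
      simp [Matrix.mul_apply, permMatrix, mul_sub, Finset.sum_sub_distrib, mul_ite]
    rw [hPD]
    unfold Matrix.trace
    have h0 : ∀ u : V, (if u = θ u then (1:ℤ) else 0) = 0 := by
      intro u; simp [Ne.symm (hθ u)]
    simp [Matrix.diag, Finset.sum_sub_distrib, h0]
end

section
/- Work with a finite oriented multigraph given by finite types V (vertices) and E (edges) together with maps s t : E → V. Let θ : Equiv.Perm V, and let M N : Matrix E E ℤ both be chain maps over θ that are both HTC. Then Matrix.trace M = Matrix.trace N. -/
theorem trace_eq_of_chainMap_HTC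
    {V E : Type*} [Fintype V] [DecidableEq V] [Fintype E]
    (s t : E → V) (θ : Equiv.Perm V) (M N : Matrix E E ℤ)
    (hM : IsChainMap s t θ M) (hN : IsChainMap s t θ N)
    (hMhtc : IsHTC s t M) (hNhtc : IsHTC s t N) :
    Matrix.trace M = Matrix.trace N := by
  classical
  set D := M - N with hD
  have hbD : boundaryMatrix s t * D = 0 := by
    rw [hD, Matrix.mul_sub, hM, hN, sub_self]
  have hDker : ∀ x : E → ℤ, (boundaryMatrix s t).mulVec x = 0 → D.mulVec x = 0 := by
    intro x hx
    rw [hD, Matrix.sub_mulVec, hMhtc x hx, hNhtc x hx, sub_self]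
  have hD2 : D * D = 0 := by
    have key : ∀ x : E → ℤ, (D * D).mulVec x = 0 := by
      intro x
      rw [← Matrix.mulVec_mulVec]
      apply hDker
      rw [Matrix.mulVec_mulVec, hbD, Matrix.zero_mulVec]
    ext i j
    have := congrFun (key (Pi.single j 1)) i
    simpa [Matrix.mulVec_single] using this
  have hnil : IsNilpotent D := ⟨2, by rw [pow_two, hD2]⟩
  have htr : IsNilpotent (Matrix.trace D) :=
    Matrix.isNilpotent_trace_of_isNilpotent hnil
  have h0 : Matrix.trace D = 0 := htr.eq_zero
  rw [hD, Matrix.trace_sub] at h0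
  linarith
end

section
/- Work with a finite oriented multigraph given by finite types V (vertices) and E (edges) together with maps s t : E → V, with V nonempty. Assume the multigraph has no loops and is connected, let θ : Equiv.Perm V satisfy θ x ≠ x for every x : V, and let M : Matrix E E ℤ be a chain map over θ that is HTC. Then Matrix.trace M = -1. -/
lemma factor_of_ker_le_ker' {K V₁ V₂ V₃ : Type*} [Field K]
    [AddCommGroup V₁] [Module K V₁] [AddCommGroup V₂] [Module K V₂]
    [AddCommGroup V₃] [Module K V₃]
    (f : V₁ →ₗ[K] V₂) (g : V₁ →ₗ[K] V₃)
    (hker : LinearMap.ker f ≤ LinearMap.ker g) :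
    ∃ h : V₂ →ₗ[K] V₃, g = h ∘ₗ f := by
  let gbar := (LinearMap.ker f).liftQ g hker
  let e := f.quotKerEquivRange
  obtain ⟨h, hh⟩ := LinearMap.exists_extend (gbar ∘ₗ (e.symm.toLinearMap))
  refine ⟨h, ?_⟩
  ext x
  have h1 : (⟨f x, LinearMap.mem_range_self f x⟩ : LinearMap.range f) =
      e (Submodule.Quotient.mk x) := by
    ext
    simp [e, LinearMap.quotKerEquivRange_apply_mk]
  have h2 : h (f x) = (h ∘ₗ (LinearMap.range f).subtype)
      ⟨f x, LinearMap.mem_range_self f x⟩ := rfl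
  rw [LinearMap.comp_apply, h2, hh, LinearMap.comp_apply, h1,
    LinearEquiv.coe_coe, LinearEquiv.symm_apply_apply]
  rfl

lemma den_mul_self' (q : ℚ) : (q.den : ℚ) * q = q.num := by
  have hd : (q.den : ℚ) ≠ 0 := by exact_mod_cast q.den_nz
  have h := Rat.num_div_den q
  rw [div_eq_iff hd] at h
  rw [mul_comm, ← h]

theorem trace_eq_neg_one_of_chainMap_HTC
    {V E : Type*} [Fintype V] [DecidableEq V] [Fintype E] [Nonempty V]
    (s t : E → V) (hloop : NoLoops s t) (hconn : IsConn s t)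
    (θ : Equiv.Perm V) (hθ : ∀ x : V, θ x ≠ x)
    (M : Matrix E E ℤ) (hM : IsChainMap s t θ M) (hMhtc : IsHTC s t M) :
    Matrix.trace M = -1 := by
  classical
  set D : Matrix V E ℤ := boundaryMatrix s t with hD
  set DQ : Matrix V E ℚ := D.map ((↑) : ℤ → ℚ) with hDQ
  set MQ : Matrix E E ℚ := M.map ((↑) : ℤ → ℚ) with hMQ
  set PQ : Matrix V V ℚ := (permMatrix θ).map ((↑) : ℤ → ℚ) with hPQ
  have castVec : ∀ (A : Matrix V E ℤ) (y : E → ℤ) (v : V),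
      (((A.mulVec y) v : ℤ) : ℚ) = (A.map ((↑) : ℤ → ℚ)).mulVec (fun e => (y e : ℚ)) v := by
    intro A y v
    simp [Matrix.mulVec, dotProduct, Matrix.map_apply]
  have castVecM : ∀ (A : Matrix E E ℤ) (y : E → ℤ) (v : E),
      (((A.mulVec y) v : ℤ) : ℚ) = (A.map ((↑) : ℤ → ℚ)).mulVec (fun e => (y e : ℚ)) v := by
    intro A y v
    simp [Matrix.mulVec, dotProduct, Matrix.map_apply]
  -- HTC over ℚ
  have hKQ : ∀ x : E → ℚ, DQ.mulVec x = 0 → MQ.mulVec x = 0 := by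
    intro x hx
    set d : ℤ := ∏ e : E, ((x e).den : ℤ) with hd
    have hden : ∀ e : E, (x e).den ≠ 0 := fun e => (x e).den_nz
    have hdne : d ≠ 0 := by
      apply Finset.prod_ne_zero_iff.mpr
      intro e _
      exact_mod_cast hden e
    have hdvd : ∀ e : E, ((x e).den : ℤ) ∣ d :=
      fun e => Finset.dvd_prod_of_mem _ (Finset.mem_univ e)
    set y : E → ℤ := fun e => (x e).num * (d / ((x e).den : ℤ)) with hy
    have hcast : ∀ e : E, ((y e : ℤ) : ℚ) = (d : ℚ) * x e := by
      intro e
      obtain ⟨k, hk⟩ := hdvd e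
      have hne : ((x e).den : ℤ) ≠ 0 := by exact_mod_cast hden e
      have h1 : y e = (x e).num * k := by
        rw [hy]; dsimp only; rw [hk, Int.mul_ediv_cancel_left _ hne]
      have h2 := den_mul_self' (x e)
      rw [h1, hk]
      push_cast
      rw [mul_assoc, mul_comm (k : ℚ) (x e), ← mul_assoc, h2]
    have hyx : (fun e => ((y e : ℤ) : ℚ)) = (d : ℚ) • x := by
      funext e; simp [hcast e, Pi.smul_apply, smul_eq_mul]
    have hDy : D.mulVec y = 0 := by
      funext v
      have h3 : ((D.mulVec y v : ℤ) : ℚ) = 0 := by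
        rw [castVec D y v, hyx]
        show DQ.mulVec _ v = 0
        rw [Matrix.mulVec_smul, hx]
        simp
      exact_mod_cast h3
    have hMy := hMhtc y hDy
    have h4 : MQ.mulVec ((d : ℚ) • x) = 0 := by
      rw [← hyx]
      funext e'
      have h5 : ((M.mulVec y e' : ℤ) : ℚ) = 0 := by rw [hMy]; simp
      rw [castVecM M y e'] at h5
      exact h5
    rw [Matrix.mulVec_smul] at h4
    have hdq : (d : ℚ) ≠ 0 := by exact_mod_cast hdne
    exact (smul_eq_zero.mp h4).resolve_left hdq
  -- factor MQ = N * DQ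
  have hker : LinearMap.ker (Matrix.mulVecLin DQ) ≤ LinearMap.ker (Matrix.mulVecLin MQ) := by
    intro x hx
    simp only [LinearMap.mem_ker, Matrix.mulVecLin_apply] at *
    exact hKQ x hx
  obtain ⟨h, hh⟩ := factor_of_ker_le_ker' (Matrix.mulVecLin DQ) (Matrix.mulVecLin MQ) hker
  set N : Matrix E V ℚ := LinearMap.toMatrix' h with hN
  have hhN : Matrix.mulVecLin N = h := by
    rw [← Matrix.toLin'_apply' N, hN, Matrix.toLin'_toMatrix']
  have hfac : MQ = N * DQ := by
    have h6 : Matrix.mulVecLin MQ = Matrix.mulVecLin (N * DQ) := by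
      rw [Matrix.mulVecLin_mul, hhN]; exact hh
    have h7 := congrArg LinearMap.toMatrix' h6
    rwa [← Matrix.toLin'_apply' MQ, ← Matrix.toLin'_apply' (N * DQ),
      LinearMap.toMatrix'_toLin', LinearMap.toMatrix'_toLin'] at h7
  set A : Matrix V V ℚ := DQ * N with hA
  have hDM : DQ * MQ = PQ * DQ := by
    have h8 : (D * M).map ((Int.castRingHom ℚ) : ℤ → ℚ)
        = ((permMatrix θ) * D).map ((Int.castRingHom ℚ) : ℤ → ℚ) := by
      rw [hD]; rw [hM]
    rw [Matrix.map_mul, Matrix.map_mul] at h8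
    simpa using h8
  have hsub : (A - PQ) * DQ = 0 := by
    rw [Matrix.sub_mul, hA, Matrix.mul_assoc, ← hfac, hDM, sub_self]
  have hdot : ∀ (r : V → ℚ) (e : E), ∑ v, r v * DQ v e = r (t e) - r (s e) := by
    intro r e
    rw [hDQ, hD]
    simp only [boundaryMatrix, Matrix.map_apply]
    push_cast
    simp [mul_sub, Finset.sum_sub_distrib, mul_ite, mul_one, mul_zero, Finset.sum_ite_eq']
  have hedge : ∀ (u : V) (e : E), (A - PQ) u (s e) = (A - PQ) u (t e) := by
    intro u e
    have h9 : ((A - PQ) * DQ) u e = 0 := by rw [hsub]; rfl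
    rw [Matrix.mul_apply] at h9
    rw [hdot (fun v => (A - PQ) u v) e] at h9
    linarith [h9]
  have hconst : ∀ (u v w : V), (A - PQ) u v = (A - PQ) u w := by
    intro u v w
    induction hconn v w with
    | rel a b hab =>
      obtain ⟨e, hs, ht⟩ := hab
      subst hs; subst ht
      exact hedge u e
    | refl a => rfl
    | symm a b _ ih => exact ih.symm
    | trans a b c _ _ ih1 ih2 => exact ih1.trans ih2
  obtain ⟨v₀⟩ := (inferInstance : Nonempty V)
  have hcolD : ∀ e : E, ∑ v, DQ v e = 0 := by
    intro e
    rw [hDQ, hD]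
    simp only [boundaryMatrix, Matrix.map_apply]
    push_cast
    simp [Finset.sum_sub_distrib, Finset.sum_ite_eq']
  have hcolA : ∑ u, A u v₀ = 0 := by
    rw [hA]
    simp only [Matrix.mul_apply]
    rw [Finset.sum_comm]
    apply Finset.sum_eq_zero
    intro e _
    rw [← Finset.sum_mul, hcolD e, zero_mul]
  have hcolP : ∑ u, PQ u v₀ = 1 := by
    rw [hPQ]
    simp [permMatrix, Matrix.map_apply, Finset.sum_ite_eq']
  have hsum : ∑ u, (A - PQ) u v₀ = -1 := by
    simp only [Matrix.sub_apply, Finset.sum_sub_distrib]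
    rw [hcolA, hcolP]
    norm_num
  have hPdiag : ∀ u, PQ u u = 0 := by
    intro u
    rw [hPQ]
    simp [permMatrix, Matrix.map_apply, if_neg (Ne.symm (hθ u))]
  have htrA : Matrix.trace A = -1 := by
    have hc : ∀ u : V, A u u = (A - PQ) u v₀ + PQ u u := by
      intro u
      rw [← hconst u u v₀]
      simp [Matrix.sub_apply]
    calc Matrix.trace A = ∑ u, A u u := by simp [Matrix.trace, Matrix.diag]
      _ = ∑ u, ((A - PQ) u v₀ + PQ u u) := Finset.sum_congr rfl (fun u _ => hc u)
      _ = (∑ u, (A - PQ) u v₀) + ∑ u, PQ u u := Finset.sum_add_distrib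
      _ = -1 := by
          rw [hsum]
          simp [hPdiag]
  have htrMQ : Matrix.trace MQ = -1 := by
    rw [hfac, Matrix.trace_mul_comm, ← hA, htrA]
  have hcast2 : ((Matrix.trace M : ℤ) : ℚ) = Matrix.trace MQ := by
    rw [hMQ]
    simp [Matrix.trace, Matrix.diag, Matrix.map_apply]
  rw [htrMQ] at hcast2
  exact_mod_cast hcast2
end

section
/- Work with a finite oriented multigraph given by finite types V (vertices) and E (edges) together with maps s t : E → V. Let θ : Equiv.Perm V, and let M N : Matrix E E ℤ both be chain maps over θ that are both HTC. Then for every natural number r with 1 ≤ r, M ^ r = M * N ^ (r - 1). -/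
lemma htc_mul_cancel {V E : Type*} [Fintype V] [DecidableEq V] [Fintype E]
    (s t : E → V) (K A B : Matrix E E ℤ) (hK : IsHTC s t K)
    (h : boundaryMatrix s t * A = boundaryMatrix s t * B) : K * A = K * B := by
  have hzero : K * (A - B) = 0 := by
    ext i j
    have hb : (boundaryMatrix s t).mulVec (fun e => (A - B) e j) = 0 := by
      funext v
      have : (boundaryMatrix s t * (A - B)) v j = 0 := by
        rw [Matrix.mul_sub, h, sub_self]
        rfl
      simpa [Matrix.mulVec, Matrix.mul_apply, dotProduct] using this
    have := congrFun (hK _ hb) i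
    simpa [Matrix.mulVec, Matrix.mul_apply, dotProduct] using this
  have : K * A - K * B = 0 := by rw [← Matrix.mul_sub]; exact hzero
  exact sub_eq_zero.mp this

theorem pow_eq_mul_pow_pred_of_chainMap_HTC
    {V E : Type*} [Fintype V] [DecidableEq V] [Fintype E] [DecidableEq E]
    (s t : E → V) (θ : Equiv.Perm V) (M N : Matrix E E ℤ)
    (hM : IsChainMap s t θ M) (hN : IsChainMap s t θ N)
    (hMhtc : IsHTC s t M) (hNhtc : IsHTC s t N) :
    ∀ r : ℕ, 1 ≤ r → M ^ r = M * N ^ (r - 1) := by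
  have hMN : M * M = M * N := htc_mul_cancel s t M M N hMhtc (hM.trans hN.symm)
  have hNM : N * M = N * N := htc_mul_cancel s t N M N hNhtc (hM.trans hN.symm)
  have key : ∀ k : ℕ, M * N ^ k * M = M * N ^ (k + 1) := by
    intro k
    induction k with
    | zero => simpa using hMN
    | succ n ih =>
      rw [pow_succ, ← mul_assoc, mul_assoc (M * N ^ n) N M, hNM,
        ← mul_assoc]
      simp [pow_succ, mul_assoc]
  intro r hr
  obtain ⟨k, rfl⟩ := Nat.exists_eq_add_of_le hr
  clear hr
  induction k with
  | zero => simp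
  | succ n ih =>
    have h1 : 1 + (n + 1) = (1 + n) + 1 := by ring
    have h2 : (1 + n) - 1 = n := by omega
    have h3 : (1 + n + 1) - 1 = n + 1 := by omega
    rw [h1, pow_succ, ih, h2, h3, key n]
end

section
/- Work with a finite oriented multigraph given by finite types V (vertices) and E (edges) together with maps s t : E → V, with V nonempty. Assume the multigraph has no loops and is connected. Let p be a natural number with 1 ≤ p, let θ : Equiv.Perm V satisfy θ ^ p = 1, and let M : Matrix E E ℤ be a chain map over θ that is HTC. Then M ^ (p + 1) = M. -/
/-! Chain maps over `θ` compose to chain maps over the product of the permutations, so `M ^ p`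
is a chain map over `θ ^ p = 1`, i.e. `∂ * (M ^ p - 1) = 0`. Every column of `M ^ p - 1` is
therefore a cycle, which the HTC matrix `M` kills: `M * (M ^ p - 1) = 0`. -/

section PermMatrix

variable {V : Type*} [DecidableEq V]

lemma permMatrix_one : permMatrix (1 : Equiv.Perm V) = 1 := by
  ext u w
  simp only [permMatrix, Matrix.one_apply, Equiv.Perm.one_apply]
  congr

lemma permMatrix_mul [Fintype V] (θ σ : Equiv.Perm V) :
    permMatrix θ * permMatrix σ = permMatrix (θ * σ) := by
  ext u w
  simp only [permMatrix, Matrix.mul_apply, mul_ite, mul_one, mul_zero, Finset.sum_ite_eq',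
    Finset.mem_univ, if_true, Equiv.Perm.mul_apply]
  congr

end PermMatrix

namespace IsChainMap

variable {V E : Type*} [Fintype V] [DecidableEq V] [Fintype E] {s t : E → V}

lemma one [DecidableEq E] : IsChainMap s t 1 1 := by
  rw [IsChainMap, permMatrix_one, Matrix.mul_one, Matrix.one_mul]

lemma mul {θ σ : Equiv.Perm V} {M N : Matrix E E ℤ} (hM : IsChainMap s t θ M)
    (hN : IsChainMap s t σ N) : IsChainMap s t (θ * σ) (M * N) := by
  rw [IsChainMap, ← Matrix.mul_assoc, hM, Matrix.mul_assoc, hN, ← Matrix.mul_assoc,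
    permMatrix_mul]

lemma pow [DecidableEq E] {θ : Equiv.Perm V} {M : Matrix E E ℤ} (hM : IsChainMap s t θ M)
    (n : ℕ) : IsChainMap s t (θ ^ n) (M ^ n) := by
  induction n with
  | zero => exact one
  | succ n ih => rw [pow_succ, pow_succ]; exact ih.mul hM

lemma boundaryMatrix_mul_sub_one [DecidableEq E] {M : Matrix E E ℤ} (hM : IsChainMap s t 1 M) :
    boundaryMatrix s t * (M - 1) = 0 := by
  rw [Matrix.mul_sub, hM, permMatrix_one, Matrix.one_mul, Matrix.mul_one, sub_self]

end IsChainMap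

lemma IsHTC.mul_eq_zero {V E ι : Type*} [DecidableEq V] [Fintype E] [Fintype ι] [DecidableEq ι]
    {s t : E → V} {M : Matrix E E ℤ} (hM : IsHTC s t M) {A : Matrix E ι ℤ}
    (hA : boundaryMatrix s t * A = 0) : M * A = 0 := by
  refine Matrix.ext_of_mulVec_single fun i => ?_
  have hcycle : (boundaryMatrix s t).mulVec (A.mulVec (Pi.single i 1)) = 0 := by
    rw [Matrix.mulVec_mulVec, hA, Matrix.zero_mulVec]
  rw [← Matrix.mulVec_mulVec, hM _ hcycle, Matrix.zero_mulVec]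

lemma pow_succ_eq_self_of_mul_pow_sub_one_eq_zero {R : Type*} [Ring R] {a : R} {p : ℕ}
    (h : a * (a ^ p - 1) = 0) : a ^ (p + 1) = a := by
  rwa [mul_sub, mul_one, sub_eq_zero, ← pow_succ'] at h

theorem pow_succ_eq_self_of_chainMap_HTC_general
    {V E : Type*} [Fintype V] [DecidableEq V] [Fintype E] [DecidableEq E]
    (s t : E → V)
    (p : ℕ) (θ : Equiv.Perm V) (hθ : θ ^ p = 1)
    (M : Matrix E E ℤ) (hM : IsChainMap s t θ M) (hMhtc : IsHTC s t M) :
    M ^ (p + 1) = M := by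
  have hMp : IsChainMap s t 1 (M ^ p) := hθ ▸ hM.pow p
  exact pow_succ_eq_self_of_mul_pow_sub_one_eq_zero
    (hMhtc.mul_eq_zero hMp.boundaryMatrix_mul_sub_one)

theorem pow_succ_eq_self_of_chainMap_HTC
    {V E : Type*} [Fintype V] [DecidableEq V] [Fintype E] [DecidableEq E] [Nonempty V]
    (s t : E → V) (hloop : NoLoops s t) (hconn : IsConn s t)
    (p : ℕ) (hp : 1 ≤ p) (θ : Equiv.Perm V) (hθ : θ ^ p = 1)
    (M : Matrix E E ℤ) (hM : IsChainMap s t θ M) (hMhtc : IsHTC s t M) :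
    M ^ (p + 1) = M :=
  pow_succ_eq_self_of_chainMap_HTC_general s t p θ hθ M hM hMhtc
end

section
/- Let α be a type, let a : α, and let i be a natural number with 2 ≤ i. Let P : Fin i → List α be pairwise distinct lists such that for every j : Fin i there is a list t_j with P j = a :: t_j and a ∉ t_j. Let A : Fin i → ℕ satisfy 1 ≤ A j for every j, and let w = (List.ofFn (fun j => (List.replicate (A j) (P j)).flatten)).flatten, i.e., w is the concatenation P 0 repeated A 0 times, followed by P 1 repeated A 1 times, and so on. Then there do not exist a list u : List α and a natural number m with 2 ≤ m such that w = (List.replicate m u).flatten. -/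
/-!
Every list beginning with `a` factors uniquely into prime blocks. If the grouped word were
`u ^ m` with `m ≥ 2`, factoring `u = L.flatten` would make the block sequence
`P 0, …, P 0, P 1, …` equal to `L ^ m`. That sequence is sorted by block index, but in a sorted
`L ++ L ++ …` every element of `L` precedes every other, forcing `P 1` before `P 0`.
-/

section

variable {α : Type*}

def IsPrimeBlock (a : α) (l : List α) : Prop := ∃ t, l = a :: t ∧ a ∉ t

lemma head?_flatten_of_isPrimeBlock {a : α} {L : List (List α)}
    (hL : ∀ l ∈ L, IsPrimeBlock a l) : ∀ x ∈ L.flatten.head?, x = a := by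
  cases L with
  | nil => simp
  | cons l L =>
    obtain ⟨t, rfl, -⟩ := hL l List.mem_cons_self
    simp

lemma eq_of_append_eq_append_of_notMem {a : α} {t₁ t₂ l₁ l₂ : List α}
    (ht₁ : a ∉ t₁) (ht₂ : a ∉ t₂)
    (hl₁ : ∀ x ∈ l₁.head?, x = a) (hl₂ : ∀ x ∈ l₂.head?, x = a)
    (h : t₁ ++ l₁ = t₂ ++ l₂) : t₁ = t₂ := by
  induction t₁ generalizing t₂ with
  | nil =>
    cases t₂ with
    | nil => rfl
    | cons y t₂ => subst h; simp_all
  | cons x t₁ ih =>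
    cases t₂ with
    | nil => subst h; simp_all
    | cons y t₂ =>
      simp only [List.cons_append, List.cons.injEq] at h
      obtain ⟨rfl, h⟩ := h
      rw [ih (List.not_mem_of_not_mem_cons ht₁) (List.not_mem_of_not_mem_cons ht₂) h]

lemma eq_of_flatten_eq_of_isPrimeBlock {a : α} {L₁ L₂ : List (List α)}
    (hL₁ : ∀ l ∈ L₁, IsPrimeBlock a l) (hL₂ : ∀ l ∈ L₂, IsPrimeBlock a l)
    (h : L₁.flatten = L₂.flatten) : L₁ = L₂ := by
  induction L₁ generalizing L₂ with
  | nil => cases L₂ <;> simp_all [IsPrimeBlock]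
  | cons l₁ L₁ ih =>
    cases L₂ with
    | nil => simp_all [IsPrimeBlock]
    | cons l₂ L₂ =>
      simp only [List.forall_mem_cons] at hL₁ hL₂
      obtain ⟨⟨t₁, rfl, ht₁⟩, hL₁⟩ := hL₁
      obtain ⟨⟨t₂, rfl, ht₂⟩, hL₂⟩ := hL₂
      simp only [List.flatten_cons, List.cons_append, List.cons.injEq, true_and] at h
      obtain rfl := eq_of_append_eq_append_of_notMem ht₁ ht₂
        (head?_flatten_of_isPrimeBlock hL₁) (head?_flatten_of_isPrimeBlock hL₂) h
      rw [ih hL₁ hL₂ (List.append_cancel_left h)]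

lemma exists_isPrimeBlock_flatten_eq (a : α) (s : List α) :
    ∃ L : List (List α), (∀ l ∈ L, IsPrimeBlock a l) ∧ L.flatten = a :: s := by
  induction s with
  | nil => exact ⟨[[a]], by simp [IsPrimeBlock], rfl⟩
  | cons x s ih =>
    obtain ⟨L, hL, hLs⟩ := ih
    by_cases hx : x = a
    · subst hx
      exact ⟨[x] :: L, by simpa [IsPrimeBlock] using hL, by simp [hLs]⟩
    · obtain ⟨l, L, rfl⟩ : ∃ l L', L = l :: L' :=
        List.exists_cons_of_ne_nil (by rintro rfl; simp at hLs)
      simp only [List.forall_mem_cons] at hL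
      obtain ⟨⟨t, rfl, ht⟩, hL⟩ := hL
      refine ⟨(a :: x :: t) :: L, ?_, ?_⟩
      · simpa [IsPrimeBlock, Ne.symm hx, ht] using hL
      · simp_all

lemma exists_eq_cons_of_flatten_eq_flatten_replicate {a : α} {L : List (List α)}
    (hL : ∀ l ∈ L, IsPrimeBlock a l) (hL₀ : L ≠ []) {u : List α} {m : ℕ} (hm : m ≠ 0)
    (h : L.flatten = (List.replicate m u).flatten) : ∃ s, u = a :: s := by
  obtain ⟨l, L, rfl⟩ := List.exists_cons_of_ne_nil hL₀
  obtain ⟨t, rfl, -⟩ := hL l List.mem_cons_self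
  obtain ⟨m, rfl⟩ := Nat.exists_eq_succ_of_ne_zero hm
  cases u <;> simp_all [List.replicate_succ]

lemma List.Pairwise.of_flatten_replicate {r : α → α → Prop} {l : List α} {m : ℕ}
    (h : ((List.replicate m l).flatten).Pairwise r) (hm : 2 ≤ m) :
    ∀ x ∈ l, ∀ y ∈ l, r x y := by
  have := (List.pairwise_flatten.mp h).2
  rw [List.pairwise_replicate] at this
  exact this.resolve_left (by omega)

lemma List.pairwise_flatten_ofFn_replicate {β : Type*} {n : ℕ} {r : β → β → Prop}
    {f : Fin n → β} (hf : ∀ j k, j ≤ k → r (f j) (f k)) (A : Fin n → ℕ) :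
    ((List.ofFn fun j => List.replicate (A j) (f j)).flatten).Pairwise r := by
  refine List.pairwise_flatten.mpr ⟨?_, List.pairwise_ofFn.mpr ?_⟩
  · simp only [List.mem_ofFn, forall_exists_index, forall_apply_eq_imp_iff]
    exact fun j => List.pairwise_replicate.mpr (Or.inr (hf j j le_rfl))
  · intro j k hjk x hx y hy
    rw [List.eq_of_mem_replicate hx, List.eq_of_mem_replicate hy]
    exact hf j k hjk.le

end

theorem grouped_prime_blocks_not_repetition
    {α : Type*} (a : α) (i : ℕ) (hi : 2 ≤ i)
    (P : Fin i → List α) (hPdist : Function.Injective P)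
    (hPprime : ∀ j : Fin i, ∃ t : List α, P j = a :: t ∧ a ∉ t)
    (A : Fin i → ℕ) (hA : ∀ j : Fin i, 1 ≤ A j) :
    ¬ ∃ (u : List α) (m : ℕ), 2 ≤ m ∧
        (List.ofFn (fun j : Fin i => (List.replicate (A j) (P j)).flatten)).flatten =
          (List.replicate m u).flatten := by
  rintro ⟨u, m, hm, hw⟩
  set Q := (List.ofFn fun j => List.replicate (A j) (P j)).flatten
  have hQ : ∀ l ∈ Q, IsPrimeBlock a l := by
    simp only [Q, List.mem_flatten, List.mem_ofFn]
    rintro l ⟨_, ⟨j, rfl⟩, hl⟩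
    exact List.eq_of_mem_replicate hl ▸ hPprime j
  have hPQ : ∀ j, P j ∈ Q := fun j => by
    simpa [Q, List.mem_flatten] using ⟨j, Nat.one_le_iff_ne_zero.mp (hA j), rfl⟩
  have hQu : Q.flatten = (List.replicate m u).flatten := by
    rw [← hw, List.flatten_flatten, List.map_ofFn]; rfl
  have hm0 : m ≠ 0 := by omega
  obtain ⟨s, rfl⟩ := exists_eq_cons_of_flatten_eq_flatten_replicate hQ
    (List.ne_nil_of_mem (hPQ ⟨0, by omega⟩)) hm0 hQu
  obtain ⟨L, hL, hLu⟩ := exists_isPrimeBlock_flatten_eq a s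
  have hQL : Q = (List.replicate m L).flatten := by
    refine eq_of_flatten_eq_of_isPrimeBlock hQ (by simpa [hm0] using hL) ?_
    simp [hQu, ← hLu, List.flatten_flatten]
  have : Nonempty (Fin i) := ⟨⟨0, by omega⟩⟩
  have hsorted : Q.Pairwise fun x y => Function.invFun P x ≤ Function.invFun P y :=
    List.pairwise_flatten_ofFn_replicate (by simp [Function.leftInverse_invFun hPdist _]) A
  have hmem : ∀ j, P j ∈ L := fun j => by simpa [hQL, List.mem_flatten, hm0] using hPQ j
  have h₁₀ :=
    (hQL ▸ hsorted).of_flatten_replicate hm _ (hmem ⟨1, by omega⟩) _ (hmem ⟨0, by omega⟩)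
  simp [Function.leftInverse_invFun hPdist _, Fin.le_def] at h₁₀
end

section
/- Let f : ℝ → ℝ be continuous, let n be a natural number with 1 ≤ n, and let a b : Fin (n+1) → ℝ satisfy a k ≤ b k for all k, Set.Icc (a k.succ) (b k.succ) ⊆ f '' (Set.Icc (a k.castSucc) (b k.castSucc)) for every k : Fin n, and a (Fin.last n) = a 0 and b (Fin.last n) = b 0. Then there exists x ∈ Set.Icc (a 0) (b 0) such that f^[n] x = x and f^[(k : ℕ)] x ∈ Set.Icc (a k) (b k) for every k : Fin (n+1). -/
open Set

private lemma pull_aux (f : ℝ → ℝ) (hf : Continuous f) {x y p q : ℝ}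
    (hxy : x ≤ y) (hpq : p ≤ q) (hfx : f x = p) (hfy : f y = q) :
    ∃ s r, x ≤ s ∧ s ≤ r ∧ r ≤ y ∧ f '' Set.Icc s r = Set.Icc p q := by
  set S : Set ℝ := {t | t ∈ Icc x y ∧ f t = p} with hS
  have hSne : S.Nonempty := ⟨x, ⟨le_refl x, hxy⟩, hfx⟩
  have hSbdd : BddAbove S := ⟨y, fun t ht => ht.1.2⟩
  have hSclosed : IsClosed S :=
    isClosed_Icc.inter (isClosed_singleton.preimage hf)
  set s := sSup S with hs
  have hsmem : s ∈ S := hSclosed.csSup_mem hSne hSbdd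
  have hxs : x ≤ s := le_csSup hSbdd ⟨⟨le_refl x, hxy⟩, hfx⟩
  have hsy : s ≤ y := hsmem.1.2
  have hfs : f s = p := hsmem.2
  set T : Set ℝ := {t | t ∈ Icc s y ∧ f t = q} with hT
  have hTne : T.Nonempty := ⟨y, ⟨hsy, le_refl y⟩, hfy⟩
  have hTbdd : BddBelow T := ⟨s, fun t ht => ht.1.1⟩
  have hTclosed : IsClosed T :=
    isClosed_Icc.inter (isClosed_singleton.preimage hf)
  set r := sInf T with hr
  have hrmem : r ∈ T := hTclosed.csInf_mem hTne hTbdd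
  have hsr : s ≤ r := hrmem.1.1
  have hry : r ≤ y := hrmem.1.2
  have hfr : f r = q := hrmem.2
  refine ⟨s, r, hxs, hsr, hry, ?_⟩
  apply Set.Subset.antisymm
  · rintro _ ⟨t, ht, rfl⟩
    constructor
    · by_contra h
      push_neg at h
      have hp : p ∈ Icc (f t) (f r) := ⟨le_of_lt h, hfr ▸ hpq⟩
      obtain ⟨t', ht', hft'⟩ := intermediate_value_Icc ht.2 hf.continuousOn hp
      have hts : s < t := lt_of_le_of_ne ht.1 (fun he => by rw [← he, hfs] at h; exact lt_irrefl _ h)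
      have : t' ≤ s := le_csSup hSbdd ⟨⟨le_trans hxs (le_trans hts.le ht'.1),
        le_trans ht'.2 hry⟩, hft'⟩
      exact absurd (lt_of_lt_of_le hts (le_trans ht'.1 this)) (lt_irrefl s)
    · by_contra h
      push_neg at h
      have hq : q ∈ Icc (f s) (f t) := ⟨hfs ▸ hpq, le_of_lt h⟩
      obtain ⟨t', ht', hft'⟩ := intermediate_value_Icc ht.1 hf.continuousOn hq
      have htr : t < r := lt_of_le_of_ne ht.2 (fun he => by rw [he, hfr] at h; exact lt_irrefl _ h)
      have : r ≤ t' := csInf_le hTbdd ⟨⟨ht'.1, le_trans (le_trans ht'.2 htr.le) hry⟩, hft'⟩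
      exact absurd (lt_of_le_of_lt (this.trans ht'.2) htr) (lt_irrefl r)
  · have := intermediate_value_Icc hsr hf.continuousOn
    rw [hfs, hfr] at this
    exact this

private lemma pull_back (f : ℝ → ℝ) (hf : Continuous f) {u v p q : ℝ}
    (hpq : p ≤ q) (hsub : Set.Icc p q ⊆ f '' Set.Icc u v) :
    ∃ s r, s ≤ r ∧ Set.Icc s r ⊆ Set.Icc u v ∧ f '' Set.Icc s r = Set.Icc p q := by
  obtain ⟨x, hx, hfx⟩ := hsub ⟨le_refl p, hpq⟩
  obtain ⟨y, hy, hfy⟩ := hsub ⟨hpq, le_refl q⟩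
  rcases le_total x y with hxy | hyx
  · obtain ⟨s, r, h1, h2, h3, h4⟩ := pull_aux f hf hxy hpq hfx hfy
    exact ⟨s, r, h2, fun t ht => ⟨le_trans hx.1 (le_trans h1 ht.1),
      le_trans ht.2 (le_trans h3 hy.2)⟩, h4⟩
  · have hg : Continuous (f ∘ Neg.neg) := hf.comp continuous_neg
    have hgx : (f ∘ Neg.neg) (-x) = p := by simp [hfx]
    have hgy : (f ∘ Neg.neg) (-y) = q := by simp [hfy]
    obtain ⟨s, r, h1, h2, h3, h4⟩ := pull_aux (f ∘ Neg.neg) hg (neg_le_neg hyx) hpq hgx hgy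
    refine ⟨-r, -s, neg_le_neg h2, fun t ht => ?_, ?_⟩
    · constructor
      · have : -r ≥ y := by linarith [h3]
        exact le_trans hy.1 (le_trans this ht.1)
      · have : -s ≤ x := by linarith [h1]
        exact le_trans ht.2 (le_trans this hx.2)
    · have : f '' Set.Icc (-r) (-s) = (f ∘ Neg.neg) '' Set.Icc s r := by
        rw [Set.image_comp, Set.image_neg_Icc]
      rw [this, h4]

theorem periodic_point_of_interval_itinerary
    (f : ℝ → ℝ) (hf : Continuous f) (n : ℕ) (hn : 1 ≤ n)
    (a b : Fin (n + 1) → ℝ) (hab : ∀ k : Fin (n + 1), a k ≤ b k)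
    (hcov : ∀ k : Fin n,
      Set.Icc (a k.succ) (b k.succ) ⊆ f '' Set.Icc (a k.castSucc) (b k.castSucc))
    (ha : a (Fin.last n) = a 0) (hb : b (Fin.last n) = b 0) :
    ∃ x ∈ Set.Icc (a 0) (b 0), f^[n] x = x ∧
      ∀ k : Fin (n + 1), f^[(k : ℕ)] x ∈ Set.Icc (a k) (b k) := by
  set A : ℕ → ℝ := fun i => a ⟨min i n, Nat.lt_succ_of_le (min_le_right i n)⟩ with hA
  set B : ℕ → ℝ := fun i => b ⟨min i n, Nat.lt_succ_of_le (min_le_right i n)⟩ with hB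
  have hABle : ∀ i, A i ≤ B i := fun i => hab _
  have key : ∀ m, m ≤ n → ∃ c d, c ≤ d ∧
      (∀ j, j ≤ m → f^[j] '' Set.Icc c d ⊆ Set.Icc (A (n - m + j)) (B (n - m + j))) ∧
      f^[m] '' Set.Icc c d = Set.Icc (A n) (B n) := by
    intro m
    induction m with
    | zero =>
      intro _
      refine ⟨A n, B n, hABle n, ?_, by simp⟩
      intro j hj
      interval_cases j
      simp
    | succ m ih =>
      intro hm1
      obtain ⟨c, d, hcd, hitin, heq⟩ := ih (le_of_lt hm1)
      have hcd0 : Set.Icc c d ⊆ Set.Icc (A (n - m)) (B (n - m)) := by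
        have := hitin 0 (Nat.zero_le m)
        simpa using this
      set k : Fin n := ⟨n - (m + 1), by omega⟩ with hk
      have hksucc : (k.succ : Fin (n + 1)) = ⟨min (n - m) n, Nat.lt_succ_of_le (min_le_right _ n)⟩ := by
        apply Fin.ext
        simp [hk, Fin.val_succ]
        try omega
      have hkcast : (k.castSucc : Fin (n + 1)) =
          ⟨min (n - (m + 1)) n, Nat.lt_succ_of_le (min_le_right _ n)⟩ := by
        apply Fin.ext
        simp [hk]
        try omega
      have hcov' : Set.Icc (A (n - m)) (B (n - m)) ⊆
          f '' Set.Icc (A (n - (m + 1))) (B (n - (m + 1))) := by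
        have := hcov k
        rw [hksucc, hkcast] at this
        exact this
      obtain ⟨s, r, hsr, hsub, himg⟩ := pull_back f hf hcd (fun t ht => hcov' (hcd0 ht))
      refine ⟨s, r, hsr, ?_, ?_⟩
      · intro j hj
        match j with
        | 0 => simpa using hsub
        | j + 1 =>
          have : f^[j + 1] '' Set.Icc s r = f^[j] '' (f '' Set.Icc s r) := by
            rw [Function.iterate_succ, Set.image_comp]
          rw [this, himg]
          have hidx : n - (m + 1) + (j + 1) = n - m + j := by omega
          rw [hidx]
          exact hitin j (by omega)
      · have : f^[m + 1] '' Set.Icc s r = f^[m] '' (f '' Set.Icc s r) := by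
          rw [Function.iterate_succ, Set.image_comp]
        rw [this, himg, heq]
  obtain ⟨c, d, hcd, hitin, heq⟩ := key n (le_refl n)
  have hAkk : ∀ k : Fin (n + 1), A (k : ℕ) = a k := fun k =>
    congrArg a (Fin.ext (Nat.min_eq_left (Fin.is_le k)))
  have hBkk : ∀ k : Fin (n + 1), B (k : ℕ) = b k := fun k =>
    congrArg b (Fin.ext (Nat.min_eq_left (Fin.is_le k)))
  have hAn : A n = a 0 := (hAkk (Fin.last n)).trans ha
  have hBn : B n = b 0 := (hBkk (Fin.last n)).trans hb
  rw [hAn, hBn] at heq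
  have hcd0 : Set.Icc c d ⊆ Set.Icc (a 0) (b 0) := by
    have := hitin 0 (Nat.zero_le n)
    simp only [Nat.sub_self, Nat.add_zero, Function.iterate_zero, Set.image_id] at this
    have h0 : A 0 = a 0 := by simpa using hAkk 0
    have h0' : B 0 = b 0 := by simpa using hBkk 0
    rwa [h0, h0'] at this
  -- find s, t in [c,d] with f^[n] s = c, f^[n] t = d
  have hcmem : c ∈ f^[n] '' Set.Icc c d := heq ▸ hcd0 ⟨le_refl c, hcd⟩
  have hdmem : d ∈ f^[n] '' Set.Icc c d := heq ▸ hcd0 ⟨hcd, le_refl d⟩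
  obtain ⟨s, hs, hfs⟩ := hcmem
  obtain ⟨t, ht, hft⟩ := hdmem
  have hg : Continuous (f^[n]) := hf.iterate n
  have hh : Continuous (fun x => f^[n] x - x) := hg.sub continuous_id
  have hzero : (0 : ℝ) ∈ Set.uIcc (f^[n] s - s) (f^[n] t - t) := by
    rw [hfs, hft, Set.uIcc_of_le (by linarith [hs.1, ht.2] : c - s ≤ d - t)]
    exact ⟨by linarith [hs.1], by linarith [ht.2]⟩
  obtain ⟨x, hx, hfx⟩ := intermediate_value_uIcc (f := fun x => f^[n] x - x)
    hh.continuousOn hzero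
  have hxcd : x ∈ Set.Icc c d := by
    have : Set.uIcc s t ⊆ Set.Icc c d := Set.uIcc_subset_Icc hs ht
    exact this hx
  have hfix : f^[n] x = x := by linarith [hfx, sub_eq_zero.mp hfx]
  refine ⟨x, hcd0 hxcd, hfix, ?_⟩
  intro k
  have hk : (k : ℕ) ≤ n := Fin.is_le k
  have := hitin (k : ℕ) hk
  have hidx : n - n + (k : ℕ) = (k : ℕ) := by omega
  rw [hidx] at this
  have hmem : f^[(k : ℕ)] x ∈ f^[(k : ℕ)] '' Set.Icc c d := ⟨x, hxcd, rfl⟩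
  have := this hmem
  rwa [hAkk k, hBkk k] at this
end
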